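/- arXiv:1812.04952 — 2 statements merged into one kernel-verified Lean document; each statement's English description precedes it below -/
import Mathlib

section
/- Let 1 < p < ∞ and D = 2^{d(p+1)/(p-1)}. Suppose Q ⊂ Q_0 are dyadic cubes in ℝ^d with Q_0 = Q^{(m)}, and suppose σ(Q^{(k+1)}) ≥ D σ(Q^{(k)}) for all 0 ≤ k < m. If moreover ⟨σ⟩_Q^{1/p'} ⟨w⟩_Q^{1/p} > [w,σ]_p / m, where [w,σ]_p = sup over cubes of ⟨w⟩_Q^{1/p}⟨σ⟩_Q^{1/p'} is finite and positive, then 2^{dm} m^{-p} < 1; in particular m is bounded by a constant depending only on d and p. -/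
open MeasureTheory ENNReal

noncomputable section

/-- The axis-parallel half-open cube with lower corner `c` and side length `l`. -/
def cube {d : ℕ} (c : Fin d → ℝ) (l : ℝ) : Set (Fin d → ℝ) :=
  {x | ∀ i, c i ≤ x i ∧ x i < c i + l}

/-- The average `⟨μ⟩_Q = μ(Q)/|Q|` of a measure over the cube with corner `c`, side `l`. -/
def cubeAvg {d : ℕ} (μ : Measure (Fin d → ℝ)) (c : Fin d → ℝ) (l : ℝ) : ℝ≥0∞ :=
  μ (cube c l) / ENNReal.ofReal (l ^ d)

/-- The Hardy–Littlewood maximal function of a measure, `M μ (x) = sup_{Q ∋ x} ⟨μ⟩_Q`. -/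
def maximal {d : ℕ} (μ : Measure (Fin d → ℝ)) (x : Fin d → ℝ) : ℝ≥0∞ :=
  ⨆ (c : Fin d → ℝ) (l : ℝ) (_ : 0 < l) (_ : x ∈ cube c l), cubeAvg μ c l

/-- The two-weight `A_p` constant `[w,σ]_p = sup_Q ⟨w⟩_Q^{1/p} ⟨σ⟩_Q^{1/p'}`. -/
def ApConst {d : ℕ} (w σ : Measure (Fin d → ℝ)) (p : ℝ) : ℝ≥0∞ :=
  ⨆ (c : Fin d → ℝ) (l : ℝ) (_ : 0 < l),
    cubeAvg w c l ^ (1 / p) * cubeAvg σ c l ^ ((p - 1) / p)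

/-- A dyadic grid: a family of cubes (given by corner and side length), each of side
`2^k` for some `k : ℤ`, any two nested or disjoint, and for each scale the cubes at
that scale partition `ℝ^d`. -/
structure IsDyadicGrid {d : ℕ} (𝒟 : Set ((Fin d → ℝ) × ℝ)) : Prop where
  scale : ∀ q ∈ 𝒟, ∃ k : ℤ, q.2 = (2 : ℝ) ^ k
  nested : ∀ q ∈ 𝒟, ∀ q' ∈ 𝒟,
    cube q.1 q.2 ⊆ cube q'.1 q'.2 ∨ cube q'.1 q'.2 ⊆ cube q.1 q.2 ∨
      Disjoint (cube q.1 q.2) (cube q'.1 q'.2)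
  partition : ∀ (k : ℤ) (x : Fin d → ℝ),
    ∃! q : (Fin d → ℝ) × ℝ, q ∈ 𝒟 ∧ q.2 = (2 : ℝ) ^ k ∧ x ∈ cube q.1 q.2

/-- The dyadic maximal function of a measure relative to a grid `𝒟`. -/
def dyadicMaximal {d : ℕ} (𝒟 : Set ((Fin d → ℝ) × ℝ)) (μ : Measure (Fin d → ℝ))
    (x : Fin d → ℝ) : ℝ≥0∞ :=
  ⨆ (q : (Fin d → ℝ) × ℝ) (_ : q ∈ 𝒟) (_ : x ∈ cube q.1 q.2), cubeAvg μ q.1 q.2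

/-! Passing from `Q` to `Q₀ = Q^{(m)}` multiplies the volume by `2^{dm}`, `σ` by at least `D^m`
and `w` by at least `1`. Hence `⟨w⟩` drops by at most `2^{-dm}` while `⟨σ⟩` grows by at least
`D^m 2^{-dm}`, and for this `D` the `A_p` product at `Q₀` is at least `2^{dm/p}` times the one at `Q`.
So `[w,σ]_p ≥ 2^{dm/p} [w,σ]_p / m`, i.e. `2^{dm/p} < m`. -/

lemma pow_mul_le_of_forall_mul_le_succ {M : Type*} [CommMonoid M] [Preorder M]
    [MulLeftMono M] {f : ℕ → M} {D : M} {m : ℕ} (h : ∀ k < m, D * f k ≤ f (k + 1)) :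
    D ^ m * f 0 ≤ f m := by
  induction m with
  | zero => simp
  | succ n ih =>
    calc D ^ (n + 1) * f 0 = D * (D ^ n * f 0) := by rw [pow_succ', mul_assoc]
      _ ≤ D * f n := mul_le_mul_right (ih fun k hk => h k (by omega)) D
      _ ≤ f (n + 1) := h n n.lt_succ_self

lemma cubeAvg_two_pow_mul {d : ℕ} (μ : Measure (Fin d → ℝ)) (c : Fin d → ℝ) (l : ℝ)
    (m : ℕ) :
    cubeAvg μ c (2 ^ m * l) =
      2 ^ (-((d * m : ℕ) : ℝ)) * (μ (cube c (2 ^ m * l)) / ENNReal.ofReal (l ^ d)) := by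
  have hvol : ENNReal.ofReal ((2 ^ m * l) ^ d) = 2 ^ (d * m) * ENNReal.ofReal (l ^ d) := by
    rw [mul_pow, ← pow_mul, ENNReal.ofReal_mul (by positivity),
      ENNReal.ofReal_pow zero_le_two, ENNReal.ofReal_ofNat, mul_comm m d]
  rw [cubeAvg, hvol, ENNReal.rpow_neg, ENNReal.rpow_natCast, ENNReal.div_eq_inv_mul,
    ENNReal.div_eq_inv_mul, ENNReal.mul_inv (by simp) (by simp), mul_assoc]

lemma le_cubeAvg_two_pow_mul {d : ℕ} {μ : Measure (Fin d → ℝ)} {c c' : Fin d → ℝ} {l : ℝ}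
    {m : ℕ} {K : ℝ≥0∞} (h : K * μ (cube c l) ≤ μ (cube c' (2 ^ m * l))) :
    K * 2 ^ (-((d * m : ℕ) : ℝ)) * cubeAvg μ c l ≤ cubeAvg μ c' (2 ^ m * l) := by
  rw [cubeAvg_two_pow_mul μ c', cubeAvg, mul_comm K, mul_assoc, ← mul_div_assoc]
  gcongr

lemma mul_cubeAvg_rpow_le_ApConst {d : ℕ} (w σ : Measure (Fin d → ℝ)) (p : ℝ)
    (c : Fin d → ℝ) {l : ℝ} (hl : 0 < l) :
    cubeAvg w c l ^ (1 / p) * cubeAvg σ c l ^ ((p - 1) / p) ≤ ApConst w σ p :=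
  le_iSup_of_le c <| le_iSup_of_le l <| le_iSup_of_le hl le_rfl

lemma lt_of_mul_le_of_div_lt {x P A m : ℝ≥0∞} (hx0 : x ≠ 0) (hx : x ≠ ∞)
    (hle : x * P ≤ A) (hlt : A / m < P) : x < m := by
  by_contra! hmx
  have : A / x < P := (ENNReal.div_le_div_left hmx A).trans_lt hlt
  rw [ENNReal.div_lt_iff (.inl hx0) (.inl hx), mul_comm] at this
  exact this.not_ge hle

lemma two_rpow_mul_le_ApConst {d : ℕ} {p : ℝ} (hp : 1 < p) {w σ : Measure (Fin d → ℝ)}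
    {c₀ c : Fin d → ℝ} {l : ℝ} (hl : 0 < l) {m : ℕ}
    (hw : w (cube c₀ l) ≤ w (cube c (2 ^ m * l)))
    (hσ : (2 : ℝ≥0∞) ^ ((d : ℝ) * (p + 1) / (p - 1) * m) * σ (cube c₀ l) ≤
      σ (cube c (2 ^ m * l))) :
    2 ^ (((d * m : ℕ) : ℝ) / p) * (cubeAvg σ c₀ l ^ ((p - 1) / p) * cubeAvg w c₀ l ^ (1 / p)) ≤
      ApConst w σ p := by
  set n : ℝ := ((d * m : ℕ) : ℝ)
  set a : ℝ := (d : ℝ) * (p + 1) / (p - 1) * m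
  have hw' : 2 ^ (-n) * cubeAvg w c₀ l ≤ cubeAvg w c (2 ^ m * l) := by
    simpa only [one_mul] using le_cubeAvg_two_pow_mul (K := 1) (by rwa [one_mul])
  have hσ' : 2 ^ (a + -n) * cubeAvg σ c₀ l ≤ cubeAvg σ c (2 ^ m * l) := by
    rw [ENNReal.rpow_add _ _ two_ne_zero ofNat_ne_top]
    exact le_cubeAvg_two_pow_mul hσ
  have hexp : -n * (1 / p) + (a + -n) * ((p - 1) / p) = n / p := by
    have : p - 1 ≠ 0 := by linarith
    simp only [n, a]
    push_cast
    field_simp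
    ring
  have hp0 : 0 ≤ 1 / p := by positivity
  have hp1 : 0 ≤ (p - 1) / p := div_nonneg (by linarith) (by positivity)
  calc 2 ^ (n / p) * (cubeAvg σ c₀ l ^ ((p - 1) / p) * cubeAvg w c₀ l ^ (1 / p))
      = (2 ^ (-n) * cubeAvg w c₀ l) ^ (1 / p) *
          (2 ^ (a + -n) * cubeAvg σ c₀ l) ^ ((p - 1) / p) := by
        rw [← hexp, ENNReal.rpow_add _ _ two_ne_zero ofNat_ne_top, ENNReal.rpow_mul,
          ENNReal.rpow_mul, ENNReal.mul_rpow_of_nonneg _ _ hp0,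
          ENNReal.mul_rpow_of_nonneg _ _ hp1]
        ring
    _ ≤ cubeAvg w c (2 ^ m * l) ^ (1 / p) * cubeAvg σ c (2 ^ m * l) ^ ((p - 1) / p) := by
        gcongr
    _ ≤ ApConst w σ p := mul_cubeAvg_rpow_le_ApConst w σ p c (by positivity)

lemma two_pow_mul_rpow_neg_lt_one {n m : ℕ} {p : ℝ} (hp : 0 < p)
    (h : (2 : ℝ≥0∞) ^ ((n : ℝ) / p) < m) : (2 : ℝ) ^ n * (m : ℝ) ^ (-p) < 1 := by
  rw [← ENNReal.ofReal_ofNat, ENNReal.ofReal_rpow_of_pos two_pos, ← ENNReal.ofReal_natCast,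
    ENNReal.ofReal_lt_ofReal_iff_of_nonneg (by positivity)] at h
  have hm : 0 < (m : ℝ) := (Real.rpow_pos_of_pos two_pos _).trans h
  have := Real.rpow_lt_rpow (by positivity) h hp
  rw [← Real.rpow_mul zero_le_two, div_mul_cancel₀ _ hp.ne', Real.rpow_natCast] at this
  rwa [Real.rpow_neg hm.le, ← div_eq_mul_inv, div_lt_one (by positivity)]

theorem stmt3_general {d : ℕ} (p : ℝ) (hp : 1 < p) (w σ : Measure (Fin d → ℝ))
    (m : ℕ) (c : ℕ → Fin d → ℝ) (l : ℝ) (hl : 0 < l)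
    (hnest : ∀ k : ℕ, cube (c k) ((2 : ℝ) ^ k * l) ⊆ cube (c (k + 1)) ((2 : ℝ) ^ (k + 1) * l))
    (hdoub : ∀ k < m,
      (2 : ℝ≥0∞) ^ ((d : ℝ) * (p + 1) / (p - 1)) * σ (cube (c k) ((2 : ℝ) ^ k * l)) ≤
        σ (cube (c (k + 1)) ((2 : ℝ) ^ (k + 1) * l)))
    (hbig : ApConst w σ p / (m : ℝ≥0∞) <
      cubeAvg σ (c 0) ((2 : ℝ) ^ (0 : ℕ) * l) ^ ((p - 1) / p) *
        cubeAvg w (c 0) ((2 : ℝ) ^ (0 : ℕ) * l) ^ (1 / p)) :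
    (2 : ℝ) ^ (d * m) * (m : ℝ) ^ (-p) < 1 := by
  set Q : ℕ → Set (Fin d → ℝ) := fun k => cube (c k) ((2 : ℝ) ^ k * l)
  have hw : w (Q 0) ≤ w (Q m) := measure_mono (monotone_nat_of_le_succ hnest m.zero_le)
  have hσ : (2 : ℝ≥0∞) ^ ((d : ℝ) * (p + 1) / (p - 1) * m) * σ (Q 0) ≤ σ (Q m) := by
    rw [ENNReal.rpow_mul_natCast]
    exact pow_mul_le_of_forall_mul_le_succ (f := fun k => σ (Q k)) hdoub
  simp only [Q, pow_zero, one_mul] at hw hσ hbig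
  have hgain := two_rpow_mul_le_ApConst hp hl hw hσ
  refine two_pow_mul_rpow_neg_lt_one (by linarith) (lt_of_mul_le_of_div_lt ?_ ?_ hgain hbig)
  · exact (ENNReal.rpow_pos two_pos ofNat_ne_top).ne'
  · exact ENNReal.rpow_ne_top_of_nonneg (by positivity) ofNat_ne_top

/-- With `D = 2^{d(p+1)/(p-1)}`: if the doubling fails at every level up to the `m`-th
ancestor, and the local `A_p` product at `Q` exceeds `[w,σ]_p/m`, then `2^{dm} m^{-p} < 1`. -/
theorem stmt3 {d : ℕ} (p : ℝ) (hp : 1 < p) (w σ : Measure (Fin d → ℝ))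
    (m : ℕ) (hm : 0 < m) (c : ℕ → Fin d → ℝ) (l : ℝ) (hl : 0 < l)
    (hnest : ∀ k : ℕ, cube (c k) ((2 : ℝ) ^ k * l) ⊆ cube (c (k + 1)) ((2 : ℝ) ^ (k + 1) * l))
    (hdoub : ∀ k < m,
      (2 : ℝ≥0∞) ^ ((d : ℝ) * (p + 1) / (p - 1)) * σ (cube (c k) ((2 : ℝ) ^ k * l)) ≤
        σ (cube (c (k + 1)) ((2 : ℝ) ^ (k + 1) * l)))
    (hA0 : ApConst w σ p ≠ 0) (hA : ApConst w σ p ≠ ∞)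
    (hbig : ApConst w σ p / (m : ℝ≥0∞) <
      cubeAvg σ (c 0) ((2 : ℝ) ^ (0 : ℕ) * l) ^ ((p - 1) / p) *
        cubeAvg w (c 0) ((2 : ℝ) ^ (0 : ℕ) * l) ^ (1 / p)) :
    (2 : ℝ) ^ (d * m) * (m : ℝ) ^ (-p) < 1 :=
  stmt3_general p hp w σ m c l hl hnest hdoub hbig
end
end

section
/- There exist finitely many (at most 3^d) dyadic grids 𝒟_1, ..., 𝒟_{3^d} on ℝ^d and a constant C depending only on d such that for every nonnegative locally integrable f, M f ≤ C · max_{1 ≤ j ≤ 3^d} M_{𝒟_j} f pointwise. -/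
/-!
For a shift `t` with `3 t` integral, the cubes of side `2^k` with corners `2^k (m + (-1)^k t)`,
`m ∈ ℤ^d`, form a dyadic grid: in units of `2^k`, the corners at scale `2^(k+1)` form
`2ℤ^d - 2(-1)^k t`, a subset of the corners `ℤ^d + (-1)^k t` at scale `2^k` because `3 t` is
integral, so every cube lies in a single cube of the next scale. Among the `2^d` grids with
`t ∈ {0, 1/3}^d`, every cube `Q` of side `l` lies in a grid cube of side `2^k ∈ (3l, 6l]`: in each
coordinate one of the two shifts puts the left endpoint of `Q` in the first two thirds of a grid
interval of length `2^k`, leaving room for the remaining length `l < 2^k / 3`. Comparing the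
averages over the two cubes gives `M μ ≤ 6^d max_t M_{𝒟_t} μ`.
-/

open MeasureTheory ENNReal

noncomputable section

lemma neg_one_zpow_mul_intCast (k : ℤ) (z : ℤ) : ∃ n : ℤ, (-1 : ℝ) ^ k * z = n := by
  rcases Int.even_or_odd k with hk | hk
  · exact ⟨z, by rw [hk.neg_one_zpow, one_mul]⟩
  · exact ⟨-z, by rw [hk.neg_one_zpow]; push_cast; ring⟩

lemma floor_eq_floor_of_le_of_lt {w v δ : ℝ} (hwv : w ≤ v) (hv : v < w + δ)
    (hδ : Int.fract w + δ ≤ 1) : ⌊v⌋ = ⌊w⌋ := by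
  rw [Int.floor_eq_iff]
  constructor
  · exact (Int.floor_le w).trans hwv
  · linarith [Int.floor_add_fract w]

lemma cubeAvg_le_of_subset {d : ℕ} {μ : Measure (Fin d → ℝ)} {c c' : Fin d → ℝ} {l L r : ℝ}
    (hl : 0 < l) (hL : 0 < L) (hsub : cube c l ⊆ cube c' L) (hLr : L ≤ r * l) :
    cubeAvg μ c l ≤ ENNReal.ofReal r ^ d * cubeAvg μ c' L := by
  have hl' : ENNReal.ofReal (l ^ d) ≠ 0 := (ENNReal.ofReal_pos.2 (pow_pos hl d)).ne'
  have hL' : ENNReal.ofReal (L ^ d) ≠ 0 := (ENNReal.ofReal_pos.2 (pow_pos hL d)).ne'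
  have hvol : ENNReal.ofReal (L ^ d) ≤ ENNReal.ofReal r ^ d * ENNReal.ofReal (l ^ d) := by
    rw [ENNReal.ofReal_pow hl.le, ← mul_pow, ← ENNReal.ofReal_mul' hl.le,
      ← ENNReal.ofReal_pow (hL.trans_le hLr).le]
    gcongr
  unfold cubeAvg
  rw [ENNReal.div_le_iff hl' ENNReal.ofReal_ne_top]
  calc μ (cube c l) ≤ μ (cube c' L) := measure_mono hsub
    _ = μ (cube c' L) / ENNReal.ofReal (L ^ d) * ENNReal.ofReal (L ^ d) :=
      (ENNReal.div_mul_cancel hL' ENNReal.ofReal_ne_top).symm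
    _ ≤ μ (cube c' L) / ENNReal.ofReal (L ^ d) *
        (ENNReal.ofReal r ^ d * ENNReal.ofReal (l ^ d)) := by gcongr
    _ = _ := by ring

lemma cubeAvg_le_dyadicMaximal {d : ℕ} {𝒟 : Set ((Fin d → ℝ) × ℝ)} {μ : Measure (Fin d → ℝ)}
    {q : (Fin d → ℝ) × ℝ} {x : Fin d → ℝ} (hq : q ∈ 𝒟) (hx : x ∈ cube q.1 q.2) :
    cubeAvg μ q.1 q.2 ≤ dyadicMaximal 𝒟 μ x :=
  le_iSup₂_of_le q hq (le_iSup_of_le hx le_rfl)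

namespace ShiftedGrid

variable {d : ℕ}

def corner (t : Fin d → ℝ) (k : ℤ) (m : Fin d → ℤ) : Fin d → ℝ :=
  fun i => 2 ^ k * (m i + (-1) ^ k * t i)

def grid (t : Fin d → ℝ) : Set ((Fin d → ℝ) × ℝ) :=
  {q | ∃ k m, q = (corner t k m, (2 : ℝ) ^ k)}

def index (t : Fin d → ℝ) (k : ℤ) (x : Fin d → ℝ) : Fin d → ℤ :=
  fun i => ⌊x i / 2 ^ k - (-1) ^ k * t i⌋

lemma mem_cube_corner_iff {t : Fin d → ℝ} {k : ℤ} {m : Fin d → ℤ} {x : Fin d → ℝ} :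
    x ∈ cube (corner t k m) ((2 : ℝ) ^ k) ↔ index t k x = m := by
  have h2 : (0 : ℝ) < 2 ^ k := zpow_pos two_pos k
  simp only [cube, corner, index, Set.mem_ofPred_eq, funext_iff, Int.floor_eq_iff]
  refine forall_congr' fun i => ?_
  rw [le_sub_iff_add_le, sub_lt_iff_lt_add, le_div_iff₀ h2, div_lt_iff₀ h2]
  constructor <;> rintro ⟨h, h'⟩ <;> constructor <;> linarith

lemma index_succ_eq {t : Fin d → ℝ} (ht : ∀ i, ∃ z : ℤ, 3 * t i = z) {k : ℤ}
    {x y : Fin d → ℝ} (h : index t k x = index t k y) : index t (k + 1) x = index t (k + 1) y := by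
  funext i
  obtain ⟨a, ha⟩ := ht i
  obtain ⟨n, hn⟩ := neg_one_zpow_mul_intCast k a
  have key : ∀ z : Fin d → ℝ, index t (k + 1) z i = (index t k z i + n) / (2 : ℕ) := by
    intro z
    have hsplit : z i / 2 ^ (k + 1) - (-1) ^ (k + 1) * t i
        = (z i / 2 ^ k - (-1) ^ k * t i + n) / (2 : ℕ) := by
      rw [zpow_add₀ two_ne_zero, zpow_add₀ (by norm_num : (-1 : ℝ) ≠ 0), ← hn, ← ha]
      push_cast
      field_simp
      ring
    rw [index, index, hsplit, Int.floor_div_natCast, Int.floor_add_intCast]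
  rw [key, key, h]

lemma index_eq_of_le {t : Fin d → ℝ} (ht : ∀ i, ∃ z : ℤ, 3 * t i = z) {k k' : ℤ} (hk : k ≤ k')
    {x y : Fin d → ℝ} (h : index t k x = index t k y) : index t k' x = index t k' y := by
  induction k', hk using Int.leInduction with
  | base => exact h
  | succ j _ ih => exact index_succ_eq ht ih

lemma cube_subset_or_disjoint {t : Fin d → ℝ} (ht : ∀ i, ∃ z : ℤ, 3 * t i = z) {k k' : ℤ}
    (hk : k ≤ k') (m m' : Fin d → ℤ) :
    cube (corner t k m) ((2 : ℝ) ^ k) ⊆ cube (corner t k' m') ((2 : ℝ) ^ k') ∨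
      Disjoint (cube (corner t k m) ((2 : ℝ) ^ k)) (cube (corner t k' m') ((2 : ℝ) ^ k')) := by
  refine or_iff_not_imp_right.2 fun h x hx => ?_
  obtain ⟨z, hz, hz'⟩ := Set.not_disjoint_iff.1 h
  rw [mem_cube_corner_iff] at hx hz hz' ⊢
  exact (index_eq_of_le ht hk (hx.trans hz.symm)).trans hz'

theorem isDyadicGrid_grid {t : Fin d → ℝ} (ht : ∀ i, ∃ z : ℤ, 3 * t i = z) :
    IsDyadicGrid (grid t) where
  scale := by
    rintro _ ⟨k, m, rfl⟩
    exact ⟨k, rfl⟩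
  nested := by
    rintro _ ⟨k, m, rfl⟩ _ ⟨k', m', rfl⟩
    rcases le_total k k' with hk | hk
    · rcases cube_subset_or_disjoint ht hk m m' with h | h
      exacts [Or.inl h, Or.inr (Or.inr h)]
    · rcases cube_subset_or_disjoint ht hk m' m with h | h
      exacts [Or.inr (Or.inl h), Or.inr (Or.inr h.symm)]
  partition := by
    intro k x
    refine ⟨(corner t k (index t k x), 2 ^ k), ⟨⟨k, _, rfl⟩, rfl, mem_cube_corner_iff.2 rfl⟩, ?_⟩
    rintro _ ⟨⟨k', m', rfl⟩, hk, hx⟩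
    obtain rfl : k' = k := zpow_right_injective₀ two_pos (by norm_num) hk
    rw [← mem_cube_corner_iff.1 hx]

lemma cube_subset_cube_corner_index {t c : Fin d → ℝ} {l : ℝ} {k : ℤ}
    (h : ∀ i, Int.fract (c i / 2 ^ k - (-1) ^ k * t i) + l / 2 ^ k ≤ 1) :
    cube c l ⊆ cube (corner t k (index t k c)) ((2 : ℝ) ^ k) := by
  have h2 : (0 : ℝ) < 2 ^ k := zpow_pos two_pos k
  intro x hx
  rw [mem_cube_corner_iff]
  funext i
  refine floor_eq_floor_of_le_of_lt ?_ ?_ (h i)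
  · gcongr
    exact (hx i).1
  · rw [sub_add_eq_add_sub, ← add_div]
    gcongr
    exact (hx i).2

def thirdShift (b : Fin d → Fin 2) : Fin d → ℝ :=
  fun i => ((b i : ℕ) : ℝ) / 3

lemma three_mul_thirdShift (b : Fin d → Fin 2) (i : Fin d) : ∃ z : ℤ, 3 * thirdShift b i = z :=
  ⟨b i, by simp [thirdShift, mul_div_cancel₀]⟩

lemma exists_fract_sub_mul_third_le (u : ℝ) {s : ℝ} (hs : s = 1 ∨ s = -1) :
    ∃ b : Fin 2, Int.fract (u - s * (((b : ℕ) : ℝ) / 3)) ≤ 2 / 3 := by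
  by_cases hu : Int.fract u ≤ 2 / 3
  · exact ⟨0, by simpa using hu⟩
  refine ⟨1, ?_⟩
  have hfl := Int.floor_add_fract u
  have hlt := Int.fract_lt_one u
  rcases hs with rfl | rfl
  · have : Int.fract (u - 1 * (((1 : Fin 2) : ℕ) / 3)) = Int.fract u - 1 / 3 :=
      Int.fract_eq_iff.2 ⟨by linarith, by linarith, ⌊u⌋, by norm_num⟩
    rw [this]
    linarith
  · have : Int.fract (u - -1 * (((1 : Fin 2) : ℕ) / 3)) = Int.fract u - 2 / 3 :=
      Int.fract_eq_iff.2 ⟨by linarith, by linarith, ⌊u⌋ + 1, by push_cast; norm_num; linarith⟩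
    rw [this]
    linarith

lemma exists_cube_superset (c : Fin d → ℝ) {l : ℝ} (hl : 0 < l) :
    ∃ (b : Fin d → Fin 2) (k : ℤ) (m : Fin d → ℤ),
      cube c l ⊆ cube (corner (thirdShift b) k m) ((2 : ℝ) ^ k) ∧ (2 : ℝ) ^ k ≤ 6 * l := by
  obtain ⟨n, hn_le, hn_lt⟩ := exists_mem_Ico_zpow (by positivity : (0 : ℝ) < 3 * l) one_lt_two
  have hsucc : (2 : ℝ) ^ (n + 1) = 2 * 2 ^ n := by rw [zpow_add_one₀ two_ne_zero, mul_comm]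
  have hs : (-1 : ℝ) ^ (n + 1) = 1 ∨ (-1 : ℝ) ^ (n + 1) = -1 := by
    rcases Int.even_or_odd (n + 1) with h | h
    exacts [Or.inl h.neg_one_zpow, Or.inr h.neg_one_zpow]
  choose b hb using fun i => exists_fract_sub_mul_third_le (c i / 2 ^ (n + 1)) hs
  refine ⟨b, n + 1, _, cube_subset_cube_corner_index fun i => ?_, by linarith⟩
  have : l / 2 ^ (n + 1) ≤ 1 / 3 := by
    rw [div_le_iff₀ (by positivity)]
    linarith
  exact (add_le_add (hb i) this).trans (by norm_num)

theorem maximal_le_mul_iSup_dyadicMaximal (μ : Measure (Fin d → ℝ)) (x : Fin d → ℝ) :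
    maximal μ x ≤ ENNReal.ofReal 6 ^ d * ⨆ b, dyadicMaximal (grid (thirdShift b)) μ x := by
  refine iSup₂_le fun c l => iSup₂_le fun hl hx => ?_
  obtain ⟨b, k, m, hsub, hk⟩ := exists_cube_superset c hl
  calc cubeAvg μ c l ≤ ENNReal.ofReal 6 ^ d * cubeAvg μ (corner (thirdShift b) k m) (2 ^ k) :=
        cubeAvg_le_of_subset hl (zpow_pos two_pos k) hsub hk
    _ ≤ _ := by
      gcongr
      exact le_iSup_of_le b (cubeAvg_le_dyadicMaximal (q := (corner (thirdShift b) k m, 2 ^ k))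
        ⟨k, m, rfl⟩ (hsub hx))

end ShiftedGrid

/-- There are at most `3^d` dyadic grids whose maximal operators dominate the
Hardy–Littlewood maximal operator, up to a dimensional constant. -/
theorem stmt8 {d : ℕ} :
    ∃ n : ℕ, n ≤ 3 ^ d ∧
      ∃ (𝒟 : Fin n → Set ((Fin d → ℝ) × ℝ)) (C : ℝ≥0∞),
        (∀ j, IsDyadicGrid (𝒟 j)) ∧ C ≠ ∞ ∧
        ∀ f : (Fin d → ℝ) → ℝ≥0∞, Measurable f → ∀ x : Fin d → ℝ,
          maximal (volume.withDensity f) x ≤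
            C * ⨆ j, dyadicMaximal (𝒟 j) (volume.withDensity f) x := by
  open ShiftedGrid in
  exact ⟨2 ^ d, Nat.pow_le_pow_left (by norm_num) d,
    fun j => grid (thirdShift (finFunctionFinEquiv.symm j)), ENNReal.ofReal 6 ^ d,
    fun j => isDyadicGrid_grid (three_mul_thirdShift _), by simp, fun f _ x =>
      (maximal_le_mul_iSup_dyadicMaximal _ x).trans_eq
        (by rw [← finFunctionFinEquiv.symm.iSup_comp])⟩
end
end
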